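/- arXiv:1508.02692 — 2 statements merged into one kernel-verified Lean document; each statement's English description precedes it below -/
import Mathlib

section
/- Let γ > 1 and u(x₁,x₂) = x₂^{(γ+1)/γ} g(x₂^{-1/γ} x₁) for x₂ > 0, where g is C². Then det D²u(x₁,x₂) = γ^{-2} g''(t)((γ+1)g(t) + (γ−1)t g'(t)) − (g'(t))², where t = x₂^{-1/γ} x₁. -/
/-- For γ > 1 and u(x₁,x₂) = x₂^((γ+1)/γ) g(x₂^(-1/γ) x₁) on {x₂ > 0}
with g ∈ C², the Hessian determinant of u equals
γ⁻² g''(t)((γ+1)g(t) + (γ-1)t g'(t)) − g'(t)², where t = x₂^(-1/γ) x₁. -/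
theorem stmt2 (γ : ℝ) (hγ : 1 < γ) (g : ℝ → ℝ) (hg : ContDiff ℝ 2 g)
    (u : ℝ → ℝ → ℝ)
    (hu : ∀ x₁ x₂ : ℝ, 0 < x₂ →
      u x₁ x₂ = x₂ ^ ((γ + 1) / γ) * g (x₂ ^ (-(1 / γ)) * x₁)) :
    ∀ x₁ x₂ : ℝ, 0 < x₂ →
      (deriv (fun s => deriv (fun s' => u s' x₂) s) x₁) *
          (deriv (fun s => deriv (fun s' => u x₁ s') s) x₂) -
        (deriv (fun y => deriv (fun x => u x y) x₁) x₂) ^ 2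
      = γ⁻¹ ^ 2 * deriv (deriv g) (x₂ ^ (-(1 / γ)) * x₁) *
            ((γ + 1) * g (x₂ ^ (-(1 / γ)) * x₁) +
              (γ - 1) * (x₂ ^ (-(1 / γ)) * x₁) * deriv g (x₂ ^ (-(1 / γ)) * x₁)) -
          (deriv g (x₂ ^ (-(1 / γ)) * x₁)) ^ 2 := by
  have hγ0 : γ ≠ 0 := by linarith
  have hgd : Differentiable ℝ g := hg.differentiable (by norm_num)
  have hgd2 : Differentiable ℝ (deriv g) := by
    have h2 : ContDiff ℝ ((1:WithTop ℕ∞) + 1) g := by norm_num; exact hg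
    exact (contDiff_succ_iff_deriv.mp h2).2.2.differentiable one_ne_zero
  -- inner x₁-derivative, for any y > 0
  have key_inner : ∀ y : ℝ, 0 < y → ∀ s : ℝ,
      deriv (fun x => u x y) s = y * deriv g (y ^ (-(1 / γ)) * s) := by
    intro y hy s
    have hfun : (fun x => u x y) = fun x => y ^ ((γ + 1) / γ) * g (y ^ (-(1 / γ)) * x) :=
      funext fun x => hu x y hy
    rw [hfun]
    have hc : HasDerivAt (fun x : ℝ => y ^ (-(1 / γ)) * x) (y ^ (-(1 / γ))) s := by
      simpa using (hasDerivAt_id s).const_mul (y ^ (-(1 / γ)))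
    have h1 : HasDerivAt (fun x => g (y ^ (-(1 / γ)) * x))
        (deriv g (y ^ (-(1 / γ)) * s) * y ^ (-(1 / γ))) s :=
      ((hgd _).hasDerivAt).comp s hc
    rw [(h1.const_mul (y ^ ((γ + 1) / γ))).deriv]
    have hyy : y ^ ((γ + 1) / γ) * y ^ (-(1 / γ)) = y := by
      rw [← Real.rpow_add hy]
      have : (γ + 1) / γ + -(1 / γ) = 1 := by field_simp; ring
      rw [this, Real.rpow_one]
    calc y ^ ((γ + 1) / γ) * (deriv g (y ^ (-(1 / γ)) * s) * y ^ (-(1 / γ)))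
        = (y ^ ((γ + 1) / γ) * y ^ (-(1 / γ))) * deriv g (y ^ (-(1 / γ)) * s) := by ring
      _ = y * deriv g (y ^ (-(1 / γ)) * s) := by rw [hyy]
  intro x₁ x₂ hx₂
  set c : ℝ := x₂ ^ (-(1 / γ)) with hc_def
  set t : ℝ := c * x₁ with ht_def
  set G : ℝ := g t
  set G' : ℝ := deriv g t
  set G'' : ℝ := deriv (deriv g) t
  -- D11
  have hD11 : deriv (fun s => deriv (fun s' => u s' x₂) s) x₁ = x₂ * (G'' * c) := by
    have hfun : (fun s => deriv (fun s' => u s' x₂) s) = fun s => x₂ * deriv g (c * s) :=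
      funext fun s => key_inner x₂ hx₂ s
    rw [hfun]
    have hcd : HasDerivAt (fun s : ℝ => c * s) c x₁ := by
      simpa using (hasDerivAt_id x₁).const_mul c
    have h1 : HasDerivAt (fun s => deriv g (c * s)) (G'' * c) x₁ :=
      ((hgd2 t).hasDerivAt).comp x₁ hcd
    rw [(h1.const_mul x₂).deriv]
  -- chain rule ingredients at a point y > 0
  have hinner : ∀ y : ℝ, 0 < y →
      HasDerivAt (fun z : ℝ => z ^ (-(1 / γ)) * x₁) (-(1 / γ) * y ^ (-(1 / γ) - 1) * x₁) y :=
    fun y hy => (Real.hasDerivAt_rpow_const (Or.inl hy.ne')).mul_const x₁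
  -- D12
  have hD12 : deriv (fun y => deriv (fun x => u x y) x₁) x₂
      = G' + x₂ * (G'' * (-(1 / γ) * x₂ ^ (-(1 / γ) - 1) * x₁)) := by
    have hEv : (fun y => y * deriv g (y ^ (-(1 / γ)) * x₁))
        =ᶠ[nhds x₂] (fun y => deriv (fun x => u x y) x₁) := by
      filter_upwards [eventually_gt_nhds hx₂] with y hy
      exact (key_inner y hy x₁).symm
    rw [← hEv.deriv_eq]
    have hgc : HasDerivAt (fun y => deriv g (y ^ (-(1 / γ)) * x₁))
        (G'' * (-(1 / γ) * x₂ ^ (-(1 / γ) - 1) * x₁)) x₂ := by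
      have := ((hgd2 t).hasDerivAt).comp x₂ (hinner x₂ hx₂); exact this
    have h := (hasDerivAt_id' (𝕜 := ℝ) (x := x₂)).mul hgc
    rw [(show HasDerivAt (fun y => y * deriv g (y ^ (-(1 / γ)) * x₁)) _ x₂ from h).deriv]
    simp only [one_mul]
    rfl
  -- D22
  have hEderiv : ∀ y : ℝ, 0 < y →
      HasDerivAt (fun z : ℝ => z ^ ((γ + 1) / γ) * g (z ^ (-(1 / γ)) * x₁))
        ((γ + 1) / γ * y ^ ((γ + 1) / γ - 1) * g (y ^ (-(1 / γ)) * x₁)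
          + y ^ ((γ + 1) / γ) *
            (deriv g (y ^ (-(1 / γ)) * x₁) * (-(1 / γ) * y ^ (-(1 / γ) - 1) * x₁))) y := by
    intro y hy
    exact (Real.hasDerivAt_rpow_const (Or.inl hy.ne')).mul
      (((hgd _).hasDerivAt).comp y (hinner y hy))
  have hD22 : deriv (fun s => deriv (fun s' => u x₁ s') s) x₂
      = ((γ + 1) / γ * (((γ + 1) / γ - 1) * x₂ ^ ((γ + 1) / γ - 1 - 1))) * G
        + ((γ + 1) / γ * x₂ ^ ((γ + 1) / γ - 1)) * (G' * (-(1 / γ) * x₂ ^ (-(1 / γ) - 1) * x₁))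
        + (((γ + 1) / γ * x₂ ^ ((γ + 1) / γ - 1)) *
            (G' * (-(1 / γ) * x₂ ^ (-(1 / γ) - 1) * x₁))
          + x₂ ^ ((γ + 1) / γ) *
            ((G'' * (-(1 / γ) * x₂ ^ (-(1 / γ) - 1) * x₁)) * (-(1 / γ) * x₂ ^ (-(1 / γ) - 1) * x₁)
              + G' * (-(1 / γ) * ((-(1 / γ) - 1) * x₂ ^ (-(1 / γ) - 1 - 1)) * x₁))) := by
    have hEv : (fun y => (γ + 1) / γ * y ^ ((γ + 1) / γ - 1) * g (y ^ (-(1 / γ)) * x₁)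
          + y ^ ((γ + 1) / γ) *
            (deriv g (y ^ (-(1 / γ)) * x₁) * (-(1 / γ) * y ^ (-(1 / γ) - 1) * x₁)))
        =ᶠ[nhds x₂] (fun y => deriv (fun s' => u x₁ s') y) := by
      filter_upwards [eventually_gt_nhds hx₂] with y hy
      have hloc : (fun s' => u x₁ s')
          =ᶠ[nhds y] (fun z => z ^ ((γ + 1) / γ) * g (z ^ (-(1 / γ)) * x₁)) := by
        filter_upwards [eventually_gt_nhds hy] with z hz
        exact hu x₁ z hz
      rw [hloc.deriv_eq, (hEderiv y hy).deriv]
    rw [← hEv.deriv_eq]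
    -- derivative of the explicit expression at x₂
    have h1 : HasDerivAt (fun y : ℝ => (γ + 1) / γ * y ^ ((γ + 1) / γ - 1))
        ((γ + 1) / γ * (((γ + 1) / γ - 1) * x₂ ^ ((γ + 1) / γ - 1 - 1))) x₂ :=
      (Real.hasDerivAt_rpow_const (Or.inl hx₂.ne')).const_mul ((γ + 1) / γ)
    have hgcomp : HasDerivAt (fun y => g (y ^ (-(1 / γ)) * x₁))
        (G' * (-(1 / γ) * x₂ ^ (-(1 / γ) - 1) * x₁)) x₂ :=
      ((hgd t).hasDerivAt).comp x₂ (hinner x₂ hx₂)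
    have hg'comp : HasDerivAt (fun y => deriv g (y ^ (-(1 / γ)) * x₁))
        (G'' * (-(1 / γ) * x₂ ^ (-(1 / γ) - 1) * x₁)) x₂ := by
      have := ((hgd2 t).hasDerivAt).comp x₂ (hinner x₂ hx₂); exact this
    have hm : HasDerivAt (fun y : ℝ => -(1 / γ) * y ^ (-(1 / γ) - 1) * x₁)
        (-(1 / γ) * ((-(1 / γ) - 1) * x₂ ^ (-(1 / γ) - 1 - 1)) * x₁) x₂ :=
      ((Real.hasDerivAt_rpow_const (Or.inl hx₂.ne')).const_mul (-(1 / γ))).mul_const x₁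
    have hT1 := h1.mul hgcomp
    have hT2 := (Real.hasDerivAt_rpow_const (p := (γ + 1) / γ) (Or.inl hx₂.ne')).mul
      (hg'comp.mul hm)
    have := (hT1.add hT2).deriv
    exact this
  rw [hD11, hD12, hD22]
  -- rewrite all powers in terms of A = x₂ ^ (1/γ)
  set A : ℝ := x₂ ^ (1 / γ) with hA_def
  have hA0 : A ≠ 0 := (Real.rpow_pos_of_pos hx₂ _).ne'
  have hx0 : x₂ ≠ 0 := hx₂.ne'
  have hsplit : ∀ p q : ℝ, x₂ ^ (p + q) = x₂ ^ p * x₂ ^ q := fun p q => Real.rpow_add hx₂ p q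
  have e4 : c = A⁻¹ := by rw [hc_def, hA_def, ← Real.rpow_neg hx₂.le]
  have e1 : x₂ ^ ((γ + 1) / γ) = x₂ * A := by
    rw [show (γ + 1) / γ = 1 + 1 / γ by field_simp, hsplit, Real.rpow_one, hA_def]
  have e2 : x₂ ^ ((γ + 1) / γ - 1) = A := by
    rw [show (γ + 1) / γ - 1 = 1 / γ by field_simp; ring, hA_def]
  have e3 : x₂ ^ ((γ + 1) / γ - 1 - 1) = A * x₂⁻¹ := by
    rw [show (γ + 1) / γ - 1 - 1 = 1 / γ + (-1) by field_simp; ring, hsplit, Real.rpow_neg_one, hA_def]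
  have e5 : x₂ ^ (-(1 / γ) - 1) = A⁻¹ * x₂⁻¹ := by
    rw [show -(1 / γ) - 1 = -(1 / γ) + (-1) by ring, hsplit, Real.rpow_neg_one,
      Real.rpow_neg hx₂.le, hA_def]
  have e6 : x₂ ^ (-(1 / γ) - 1 - 1) = A⁻¹ * x₂⁻¹ * x₂⁻¹ := by
    rw [show -(1 / γ) - 1 - 1 = (-(1 / γ) + (-1)) + (-1) by ring, hsplit, hsplit,
      Real.rpow_neg_one, Real.rpow_neg hx₂.le, hA_def]
  have hx1 : x₁ = A * t := by
    rw [ht_def, e4, ← mul_assoc, mul_inv_cancel₀ hA0, one_mul]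
  rw [e1, e2, e3, e4, e5, e6, hx1]
  field_simp
  ring
end

section
/- Let γ > 1. There exists t₀* > 0 (depending only on γ) such that for all 0 < t₀ ≤ t₀*, the quantity F[g₁,γ](t) = (2(γ+1)ab − 2(2γ−1)(γ−1)b²t²)/(γ²(γ+1)²), with a = 1 − ((γ−1)/2)t₀^{γ+1} and b = ((γ+1)/2)t₀^{γ−1}, is bounded below by c t₀^{γ−1} for all |t| ≤ t₀, for some constant c > 0 depending only on γ. -/
/-- For γ > 1 there exist t₀* > 0 and c > 0 (depending only on γ)
such that for all 0 < t₀ ≤ t₀* and |t| ≤ t₀,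
(2(γ+1)ab − 2(2γ−1)(γ−1)b²t²)/(γ²(γ+1)²) ≥ c t₀^(γ−1), where
a = 1 − ((γ−1)/2)t₀^(γ+1) and b = ((γ+1)/2)t₀^(γ−1). -/
theorem stmt6 (γ : ℝ) (hγ : 1 < γ) :
    ∃ t₀star > (0 : ℝ), ∃ c > (0 : ℝ), ∀ t₀ : ℝ, 0 < t₀ → t₀ ≤ t₀star →
      ∀ t : ℝ, |t| ≤ t₀ →
        c * t₀ ^ (γ - 1) ≤
          (2 * (γ + 1) * (1 - (γ - 1) / 2 * t₀ ^ (γ + 1)) *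
              ((γ + 1) / 2 * t₀ ^ (γ - 1)) -
            2 * (2 * γ - 1) * (γ - 1) * ((γ + 1) / 2 * t₀ ^ (γ - 1)) ^ 2 * t ^ 2) /
          (γ ^ 2 * (γ + 1) ^ 2) := by
  have hγ0 : (0:ℝ) < γ := by linarith
  have hγ1 : (0:ℝ) < γ - 1 := by linarith
  have hden : (0:ℝ) < 2 * γ * (γ - 1) := by positivity
  refine ⟨min 1 (1 / (2 * γ * (γ - 1))), by positivity, 1 / (2 * γ ^ 2), by positivity,
    ?_⟩
  intro t₀ ht₀ ht₀star t ht
  have ht₀1 : t₀ ≤ 1 := le_trans ht₀star (min_le_left _ _)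
  have ht₀2 : t₀ ≤ 1 / (2 * γ * (γ - 1)) := le_trans ht₀star (min_le_right _ _)
  set A := t₀ ^ (γ - 1) with hAdef
  set B := t₀ ^ (γ + 1) with hBdef
  have hA : 0 < A := Real.rpow_pos_of_pos ht₀ _
  have hB : 0 < B := Real.rpow_pos_of_pos ht₀ _
  have hBle : B ≤ t₀ := by
    have := Real.rpow_le_rpow_of_exponent_ge ht₀ ht₀1 (by linarith : (1:ℝ) ≤ γ + 1)
    simpa [Real.rpow_one] using this
  have hB2 : γ * (γ - 1) * B ≤ 1 / 2 := by
    have : γ * (γ - 1) * B ≤ γ * (γ - 1) * (1 / (2 * γ * (γ - 1))) := by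
      apply mul_le_mul_of_nonneg_left (le_trans hBle ht₀2) (by positivity)
    calc γ * (γ - 1) * B ≤ γ * (γ - 1) * (1 / (2 * γ * (γ - 1))) := this
      _ = 1 / 2 := by field_simp
  have hAt : A * t₀ ^ 2 = B := by
    rw [hAdef, hBdef, ← Real.rpow_natCast t₀ 2, ← Real.rpow_add ht₀]
    norm_num
    congr 1
    ring
  have ht2 : t ^ 2 ≤ t₀ ^ 2 := by
    have := sq_abs t
    nlinarith [abs_nonneg t]
  have hdpos : (0:ℝ) < γ ^ 2 * (γ + 1) ^ 2 := by positivity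
  rw [le_div_iff₀ hdpos]
  have h1 : A * A * t ^ 2 ≤ A * B := by
    calc A * A * t ^ 2 ≤ A * A * t₀ ^ 2 :=
          mul_le_mul_of_nonneg_left ht2 (by positivity)
      _ = A * B := by rw [mul_assoc, hAt]
  have h2 : A * (γ * (γ - 1) * B) ≤ A * (1 / 2) :=
    mul_le_mul_of_nonneg_left hB2 hA.le
  have h3 := mul_le_mul_of_nonneg_left h1
    (show (0:ℝ) ≤ (2 * γ - 1) * (γ - 1) * (γ + 1) ^ 2 / 2 by
      have h21 : (0:ℝ) < 2 * γ - 1 := by linarith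
      positivity)
  have h4 := mul_le_mul_of_nonneg_left h2
    (show (0:ℝ) ≤ (γ + 1) ^ 2 by positivity)
  have key : A * (γ + 1) ^ 2 / 2 ≤
      2 * (γ + 1) * (1 - (γ - 1) / 2 * B) * ((γ + 1) / 2 * A) -
        2 * (2 * γ - 1) * (γ - 1) * ((γ + 1) / 2 * A) ^ 2 * t ^ 2 := by
    linarith [h3, h4]
  have heq : 1 / (2 * γ ^ 2) * A * (γ ^ 2 * (γ + 1) ^ 2) = A * (γ + 1) ^ 2 / 2 := by
    field_simp
  linarith [key, heq.le, heq.ge]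
end
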